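/- arXiv:1212.0359 — 6 statements merged into one kernel-verified Lean document; each statement's English description precedes it below -/
import Mathlib

section
/- Let Q be a finite acyclic quiver such that every vertex is incident to at least two arrows (condition (b)), and let d_a(x+rn) = dim Ext¹_{kQ}(τ^{-r}P(x), P(a)) where n = #Q₀. Then for any arrow γ: x → y in Q and any r ≥ 0, d_a(y+rn) ≤ d_a(x+rn) ≤ d_a(y+(r+1)n). -/
/-! Combinatorics of quivers: walks in the double quiver, the function `l_Q`,
paths, acyclicity, condition (b), unique sources, and the set `L(Q)`.
A quiver on a vertex type `V` is encoded by its family of arrow types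
`H : V → V → Type`. -/

/-- Walks in the double quiver `Q̃` of the quiver `Q` encoded by `H`:
a step may traverse an arrow forwards (`fwd`) or backwards (`bwd`). -/
inductive DWalk {V : Type} (H : V → V → Type) : V → V → Type where
  | nil : (a : V) → DWalk H a a
  | fwd : {a b c : V} → DWalk H a b → H b c → DWalk H a c
  | bwd : {a b c : V} → DWalk H a b → H c b → DWalk H a c

/-- `c⁺(w)`: the number of forward (original) arrows used by a walk in `Q̃`. -/
def DWalk.cplus {V : Type} {H : V → V → Type} : {a b : V} → DWalk H a b → ℕ
  | _, _, .nil _ => 0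
  | _, _, .fwd w _ => DWalk.cplus w + 1
  | _, _, .bwd w _ => DWalk.cplus w

/-- `l_Q(i,j)`: the minimal number of forward arrows over all walks from `i`
to `j` in the double quiver `Q̃`.  (In particular `l_Q(i,i) = 0`.) -/
noncomputable def ell {V : Type} (H : V → V → Type) (i j : V) : ℕ :=
  sInf {m | ∃ w : DWalk H i j, DWalk.cplus w = m}

/-- Directed paths in the quiver `Q` itself. -/
inductive QPath {V : Type} (H : V → V → Type) : V → V → Type where
  | nil : (a : V) → QPath H a a
  | cons : {a b c : V} → QPath H a b → H b c → QPath H a c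

def QPath.length {V : Type} {H : V → V → Type} : {a b : V} → QPath H a b → ℕ
  | _, _, .nil _ => 0
  | _, _, .cons p _ => QPath.length p + 1

/-- `Q` has no loops and no (nontrivial, directed) cycles. -/
def QuiverAcyclic {V : Type} (H : V → V → Type) : Prop :=
  ∀ (a : V) (p : QPath H a a), QPath.length p = 0

/-- `Q` is connected (any two vertices are joined by a walk in `Q̃`). -/
def QuiverConnected {V : Type} (H : V → V → Type) : Prop :=
  ∀ a b : V, Nonempty (DWalk H a b)

/-- Condition (b): for every vertex `x`, `#s(x) + #t(x) > 1`. -/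
def CondB {V : Type} (H : V → V → Type) [Fintype V] [∀ a b, Fintype (H a b)] : Prop :=
  ∀ x : V, 1 < ∑ y : V, (Fintype.card (H x y) + Fintype.card (H y x))

/-- `s` is the unique source (vertex with no incoming arrows) of `Q`. -/
def UniqueSource {V : Type} (H : V → V → Type) (s : V) : Prop :=
  (∀ y : V, IsEmpty (H y s)) ∧ ∀ t : V, (∀ y : V, IsEmpty (H y t)) → t = s

/-- The set `L(Q) = {(r_i) ∈ ℤ_{≥0}^{Q₀} ∣ r_j ≤ r_i + l_Q(i,j) for all i,j}`. -/
def LSet {V : Type} (H : V → V → Type) : Set (V → ℕ) :=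
  {r | ∀ i j : V, r j ≤ r i + ell H i j}

/-! The preprojective component of the Auslander–Reiten quiver has vertices `(x, r)`, and an arrow
`x → y` of `Q` gives arrows `(y, r) → (x, r) → (y, r + 1)`. The recursion for `d_a` is the mesh
relation `d(x, r+1) = Σ d(p) - d(x, r)`, summed with multiplicity over the arrows `p → (x, r+1)`,
of which condition (b) provides at least two. Every arrow increases the index `x + rn`, so by
induction along it `d(p) ≥ d(x, r) ≥ 0` for each such `p`, because `(x, r) → p` is an arrow too.
Then `Σ d(p) - d(x, r) ≥ d(p₀) + d(x, r) - d(x, r)` for each `p₀`. -/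

theorem le_sum_mul_sub {ι : Type*} [Fintype ι] (c : ι → ℕ) (e : ι → ℤ) {D : ℤ} (hD : 0 ≤ D)
    (he : ∀ i, c i ≠ 0 → D ≤ e i) (hc : 2 ≤ ∑ i, c i) {j : ι} (hj : c j ≠ 0) :
    e j ≤ ∑ i, (c i : ℤ) * e i - D := by
  have hsplit : ∑ i, (c i : ℤ) * e i - D =
      ∑ i, (c i : ℤ) * (e i - D) + ((∑ i, (c i : ℤ)) - 1) * D := by
    simp only [mul_sub, Finset.sum_sub_distrib, ← Finset.sum_mul]
    ring
  have hterm_nonneg : ∀ i, 0 ≤ (c i : ℤ) * (e i - D) := fun i => by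
    rcases eq_or_ne (c i) 0 with h | h
    · simp [h]
    · exact mul_nonneg (Int.natCast_nonneg _) (sub_nonneg.2 (he i h))
  have hj_term : e j - D ≤ ∑ i, (c i : ℤ) * (e i - D) :=
    calc e j - D ≤ (c j : ℤ) * (e j - D) :=
          le_mul_of_one_le_left (sub_nonneg.2 (he j hj))
            (by exact_mod_cast Nat.one_le_iff_ne_zero.2 hj)
      _ ≤ _ := Finset.single_le_sum (fun i _ => hterm_nonneg i) (Finset.mem_univ j)
  have hD_le : D ≤ ((∑ i, (c i : ℤ)) - 1) * D := by
    have : (2 : ℤ) ≤ ∑ i, (c i : ℤ) := by exact_mod_cast hc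
    exact le_mul_of_one_le_left hD (by linarith)
  linarith

theorem sum_mul_sub_nonneg {ι : Type*} [Fintype ι] (c : ι → ℕ) (e : ι → ℤ) {D : ℤ} (hD : 0 ≤ D)
    (he : ∀ i, c i ≠ 0 → D ≤ e i) (hc : 2 ≤ ∑ i, c i) :
    0 ≤ ∑ i, (c i : ℤ) * e i - D := by
  obtain ⟨j, -, hj⟩ := Finset.exists_ne_zero_of_sum_ne_zero (by omega : ∑ i, c i ≠ 0)
  exact hD.trans ((he j hj).trans (le_sum_mul_sub c e hD he hc hj))

section Preprojective

variable {n : ℕ} {H : Fin n → Fin n → Type}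

/-- Arrows of the preprojective component, where `(x, r)` stands for `τ^{-r}P(x)`. -/
inductive PreprojArrow (H : Fin n → Fin n → Type) : Fin n × ℕ → Fin n × ℕ → Prop
  | mk {x y : Fin n} (r : ℕ) : H x y → PreprojArrow H (y, r) (x, r)
  | translate {x y : Fin n} (r : ℕ) : H x y → PreprojArrow H (x, r) (y, r + 1)

/-- The position `x + rn` of `τ^{-r}P(x)` in the numbering of the paper. -/
def preprojIndex (p : Fin n × ℕ) : ℕ := p.1 + p.2 * n

theorem PreprojArrow.index_lt (hdir : ∀ (a b : Fin n), H a b → (b : ℕ) < (a : ℕ))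
    {p q : Fin n × ℕ} (h : PreprojArrow H p q) : preprojIndex p < preprojIndex q := by
  cases h with
  | mk r γ => simp only [preprojIndex]; have := hdir _ _ γ; omega
  | translate r γ =>
    simp only [preprojIndex, add_mul, one_mul]
    have := Fin.isLt ‹Fin n›
    omega

/-- The recursion satisfied by `d_a(x + rn) = dim Ext¹(τ^{-r}P(x), P(a))` under condition (b). -/
structure ExtDimRecursion (H : Fin n → Fin n → Type) [∀ a b, Fintype (H a b)] (a : Fin n)
    (d : ℕ → ℤ) : Prop where
  eq_zero : ∀ (x : Fin n) (r : ℕ), (x : ℕ) + r * n < (a : ℕ) + n → d ((x : ℕ) + r * n) = 0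
  eq_one : d ((a : ℕ) + n) = 1
  mesh : ∀ (x : Fin n) (r : ℕ), (a : ℕ) + n < (x : ℕ) + (r + 1) * n →
    d ((x : ℕ) + (r + 1) * n) =
      (∑ y : Fin n, (Fintype.card (H x y) : ℤ) * d ((y : ℕ) + (r + 1) * n)) +
      (∑ y : Fin n, (Fintype.card (H y x) : ℤ) * d ((y : ℕ) + r * n)) -
      d ((x : ℕ) + r * n)

namespace ExtDimRecursion

variable [∀ a b, Fintype (H a b)] {a : Fin n} {d : ℕ → ℤ}

theorem eq_zero_of_index_lt (hd : ExtDimRecursion H a d) {p : Fin n × ℕ}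
    (hp : preprojIndex p < a + n) : d (preprojIndex p) = 0 :=
  hd.eq_zero p.1 p.2 hp

theorem nonneg_of_index_le (hd : ExtDimRecursion H a d) {q : Fin n × ℕ}
    (hq : preprojIndex q ≤ a + n) : 0 ≤ d (preprojIndex q) := by
  rcases hq.lt_or_eq with hlt | heq
  · rw [hd.eq_zero_of_index_lt hlt]
  · rw [heq, hd.eq_one]
    exact zero_le_one

theorem mesh_step (hdir : ∀ (a b : Fin n), H a b → (b : ℕ) < (a : ℕ)) (hb : CondB H)
    (hd : ExtDimRecursion H a d) {x : Fin n} {r : ℕ} (hq : a + n < preprojIndex (x, r + 1))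
    (IH : ∀ q, preprojIndex q < preprojIndex (x, r + 1) →
      0 ≤ d (preprojIndex q) ∧ ∀ p, PreprojArrow H p q → d (preprojIndex p) ≤ d (preprojIndex q)) :
    0 ≤ d (preprojIndex (x, r + 1)) ∧
      ∀ p, PreprojArrow H p (x, r + 1) → d (preprojIndex p) ≤ d (preprojIndex (x, r + 1)) := by
  have hprev : preprojIndex (x, r) < preprojIndex (x, r + 1) := by
    simp only [preprojIndex, add_mul, one_mul]
    have := x.pos
    omega
  set D := d (preprojIndex (x, r))
  have hD := (IH _ hprev).1
  -- the arrows into `(x, r + 1)` come from `(y, r + 1)` for `x → y` and from `(w, r)` for `w → x`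
  let c : Fin n ⊕ Fin n → ℕ :=
    Sum.elim (fun y => Fintype.card (H x y)) (fun w => Fintype.card (H w x))
  let e : Fin n ⊕ Fin n → ℤ :=
    Sum.elim (fun y => d (preprojIndex (y, r + 1))) (fun w => d (preprojIndex (w, r)))
  have hval : d (preprojIndex (x, r + 1)) = ∑ i, (c i : ℤ) * e i - D := by
    rw [preprojIndex, hd.mesh x r hq]
    simp [Fintype.sum_sum_type, c, e, D, preprojIndex]
  have hc : 2 ≤ ∑ i, c i := by
    simp only [Fintype.sum_sum_type, c, Sum.elim_inl, Sum.elim_inr, ← Finset.sum_add_distrib]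
    exact hb x
  have he : ∀ i, c i ≠ 0 → D ≤ e i := by
    rintro (y | w) hi
    · obtain ⟨γ⟩ := Fintype.card_pos_iff.mp (Nat.pos_of_ne_zero hi)
      have hlt := (PreprojArrow.mk (r + 1) γ).index_lt hdir
      exact (IH _ hlt).2 _ (.translate r γ)
    · obtain ⟨γ⟩ := Fintype.card_pos_iff.mp (Nat.pos_of_ne_zero hi)
      have hlt : preprojIndex (w, r) < preprojIndex (x, r + 1) := by
        simp only [preprojIndex, add_mul, one_mul]
        omega
      exact (IH _ hlt).2 _ (.mk r γ)
  rw [hval]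
  refine ⟨sum_mul_sub_nonneg c e hD he hc, ?_⟩
  rintro p (⟨_, γ⟩ | ⟨_, γ⟩)
  · exact le_sum_mul_sub c e hD he hc (j := .inl _) (Fintype.card_pos_iff.mpr ⟨γ⟩).ne'
  · exact le_sum_mul_sub c e hD he hc (j := .inr _) (Fintype.card_pos_iff.mpr ⟨γ⟩).ne'

theorem nonneg_and_le_of_arrow (hdir : ∀ (a b : Fin n), H a b → (b : ℕ) < (a : ℕ)) (hb : CondB H)
    (hd : ExtDimRecursion H a d) (q : Fin n × ℕ) :
    0 ≤ d (preprojIndex q) ∧ ∀ p, PreprojArrow H p q → d (preprojIndex p) ≤ d (preprojIndex q) := by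
  induction q using (measure preprojIndex).wf.induction with
  | _ q IH =>
    rcases le_or_gt (preprojIndex q) (a + n) with hle | hgt
    · refine ⟨hd.nonneg_of_index_le hle, fun p hp => ?_⟩
      rw [hd.eq_zero_of_index_lt ((hp.index_lt hdir).trans_le hle)]
      exact hd.nonneg_of_index_le hle
    · obtain ⟨x, _ | r⟩ := q
      · simp only [preprojIndex, zero_mul, add_zero] at hgt
        omega
      · exact hd.mesh_step hdir hb hgt IH

theorem le_of_arrow (hdir : ∀ (a b : Fin n), H a b → (b : ℕ) < (a : ℕ)) (hb : CondB H)
    (hd : ExtDimRecursion H a d) {p q : Fin n × ℕ} (h : PreprojArrow H p q) :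
    d (preprojIndex p) ≤ d (preprojIndex q) :=
  (hd.nonneg_and_le_of_arrow hdir hb q).2 p h

end ExtDimRecursion

end Preprojective

theorem d_monotone_along_arrows_general {n : ℕ}
    (H : Fin n → Fin n → Type) [∀ a b, Fintype (H a b)]
    (hdir : ∀ (a b : Fin n), H a b → (b : ℕ) < (a : ℕ))
    (hb : CondB H)
    (a : Fin n) (d : ℕ → ℤ)
    (h0 : ∀ (x : Fin n) (r : ℕ), (x : ℕ) + r * n < (a : ℕ) + n →
      d ((x : ℕ) + r * n) = 0)
    (h1 : d ((a : ℕ) + n) = 1)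
    (h2 : ∀ (x : Fin n) (r : ℕ), (a : ℕ) + n < (x : ℕ) + (r + 1) * n →
      d ((x : ℕ) + (r + 1) * n) =
        (∑ y : Fin n, (Fintype.card (H x y) : ℤ) * d ((y : ℕ) + (r + 1) * n)) +
        (∑ y : Fin n, (Fintype.card (H y x) : ℤ) * d ((y : ℕ) + r * n)) -
        d ((x : ℕ) + r * n))
    {x y : Fin n} (γ : H x y) (r : ℕ) :
    d ((y : ℕ) + r * n) ≤ d ((x : ℕ) + r * n) ∧
    d ((x : ℕ) + r * n) ≤ d ((y : ℕ) + (r + 1) * n) := by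
  have hd : ExtDimRecursion H a d := ⟨h0, h1, h2⟩
  exact ⟨hd.le_of_arrow hdir hb (.mk r γ), hd.le_of_arrow hdir hb (.translate r γ)⟩

/-- Lemma 3.2 of the paper. Let `Q` be a finite connected
acyclic quiver with vertex set `{0, …, n-1}` (arrows going from larger to
smaller indices) such that every vertex is incident to at least two arrows
(condition (b)).  Let `d_a(x + rn) = dim Ext¹(τ^{-r}P(x), P(a))`; under
condition (b) this sequence satisfies the recursion below (hypotheses
`h0`, `h1`, `h2`).  Then for any arrow `γ : x → y` of `Q` and any `r ≥ 0`,
`d_a(y + rn) ≤ d_a(x + rn) ≤ d_a(y + (r+1)n)`. -/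
theorem d_monotone_along_arrows {n : ℕ} (hn : 0 < n)
    (H : Fin n → Fin n → Type) [∀ a b, Fintype (H a b)]
    (hdir : ∀ (a b : Fin n), H a b → (b : ℕ) < (a : ℕ))
    (hb : CondB H)
    (a : Fin n) (d : ℕ → ℤ)
    (h0 : ∀ (x : Fin n) (r : ℕ), (x : ℕ) + r * n < (a : ℕ) + n →
      d ((x : ℕ) + r * n) = 0)
    (h1 : d ((a : ℕ) + n) = 1)
    (h2 : ∀ (x : Fin n) (r : ℕ), (a : ℕ) + n < (x : ℕ) + (r + 1) * n →
      d ((x : ℕ) + (r + 1) * n) =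
        (∑ y : Fin n, (Fintype.card (H x y) : ℤ) * d ((y : ℕ) + (r + 1) * n)) +
        (∑ y : Fin n, (Fintype.card (H y x) : ℤ) * d ((y : ℕ) + r * n)) -
        d ((x : ℕ) + r * n))
    {x y : Fin n} (γ : H x y) (r : ℕ) :
    d ((y : ℕ) + r * n) ≤ d ((x : ℕ) + r * n) ∧
    d ((x : ℕ) + r * n) ≤ d ((y : ℕ) + (r + 1) * n) :=
  d_monotone_along_arrows_general H hdir hb a d h0 h1 h2 γ r
end

section
/- The sequence d_a defined by the recursion d_a(x+rn) = 0 for x+rn < a+n, d_a(a+n) = 1, and d_a(x+rn) = Σ_{α: x→t(α) in Q} d_a(t(α)+rn) + Σ_{β: s(β)→x in Q} d_a(s(β)+(r-1)n) − d_a(x+(r-1)n) for x+rn > a+n, takes only non-negative values whenever Q satisfies condition (b). -/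
/-! The index `m = x + r·n` is the vertex `(x, r)` of the translation quiver `ℕQ` (the
module `τ^{-r} P(x)`), and the recursion is its mesh relation
`d(τ⁻M) = Σ_{M → E} d(E) − d(M)`.  Induction along the index shows that `d` is non-negative
and weakly increasing along every arrow of `ℕQ`: if `0 ≤ d(M) ≤ d(E)` for all middle terms `E`
of a mesh, then condition (b) says that there are at least two of them (with multiplicity), so
`Σ_E d(E) ≥ d(E₀) + d(M)` and hence `d(τ⁻M) ≥ d(E₀)` for each middle term `E₀`. -/

open Finset

theorem le_sum_nsmul_sub_of_two_le_sum {ι R : Type*} [Fintype ι] [AddCommGroup R] [LinearOrder R]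
    [IsOrderedAddMonoid R] {c : ι → ℕ} {f : ι → R} {B : R} (hB : 0 ≤ B)
    (hf : ∀ i, c i ≠ 0 → B ≤ f i) (hc : 2 ≤ ∑ i, c i) {j : ι} (hj : c j ≠ 0) :
    f j ≤ ∑ i, c i • f i - B := by
  have hterm : ∀ i ∈ univ, 0 ≤ c i • (f i - B) := fun i _ => by
    rcases eq_or_ne (c i) 0 with hi | hi
    · simp [hi]
    · exact nsmul_nonneg (sub_nonneg.mpr (hf i hi)) _
  have hsplit : ∑ i, c i • f i = ∑ i, c i • (f i - B) + (∑ i, c i) • B := by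
    simp only [smul_sub, sum_sub_distrib, sum_smul, sub_add_cancel]
  calc f j = 1 • (f j - B) + 2 • B - B := by rw [one_nsmul, two_nsmul]; abel
    _ ≤ c j • (f j - B) + (∑ i, c i) • B - B :=
        sub_le_sub_right (add_le_add
          (nsmul_le_nsmul_left (sub_nonneg.mpr (hf j hj)) (Nat.one_le_iff_ne_zero.mpr hj))
          (nsmul_le_nsmul_left hB hc)) B
    _ ≤ ∑ i, c i • f i - B := by
        rw [hsplit]
        gcongr
        exact single_le_sum hterm (mem_univ j)

namespace Preprojective

variable {n : ℕ} (H : Fin n → Fin n → Type)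

def index (q : Fin n × ℕ) : ℕ := q.1 + q.2 * n

/-- The arrows of `ℕQ`: an arrow `α : u → v` of `Q` gives `(v, r) → (u, r)` and
`(u, r) → (v, r + 1)`. -/
inductive Arrow : Fin n × ℕ → Fin n × ℕ → Prop
  | up {u v : Fin n} (α : H u v) (r : ℕ) : Arrow (v, r) (u, r)
  | down {u v : Fin n} (α : H u v) (r : ℕ) : Arrow (u, r) (v, r + 1)

variable {H}

theorem Arrow.index_lt (hdir : ∀ a b : Fin n, H a b → (b : ℕ) < a) {p q : Fin n × ℕ}
    (h : Arrow H p q) : index p < index q := by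
  cases h with
  | up α r => exact Nat.add_lt_add_right (hdir _ _ α) _
  | @down u v α r =>
    simp only [index, Nat.succ_mul]
    have := u.isLt
    omega

variable (H) [∀ a b, Fintype (H a b)]

/-- The mesh from `(x, r)` to `(x, r + 1)` has the middle terms `meshMiddle r i`, with
multiplicity `meshWeight H x i`: `inl y` counts arrows `x → y`, `inr y` arrows `y → x`. -/
def meshWeight (x : Fin n) : Fin n ⊕ Fin n → ℕ
  | .inl y => Fintype.card (H x y)
  | .inr y => Fintype.card (H y x)

def meshMiddle (r : ℕ) : Fin n ⊕ Fin n → Fin n × ℕ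
  | .inl y => (y, r + 1)
  | .inr y => (y, r)

variable {H}

theorem arrow_meshMiddle {x : Fin n} {r : ℕ} {i : Fin n ⊕ Fin n} (hi : meshWeight H x i ≠ 0) :
    Arrow H (x, r) (meshMiddle r i) ∧ Arrow H (meshMiddle r i) (x, r + 1) := by
  cases i with
  | inl y =>
    obtain ⟨α⟩ := Fintype.card_pos_iff.mp (Nat.pos_of_ne_zero hi)
    exact ⟨.down α r, .up α (r + 1)⟩
  | inr y =>
    obtain ⟨α⟩ := Fintype.card_pos_iff.mp (Nat.pos_of_ne_zero hi)
    exact ⟨.up α r, .down α r⟩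

theorem Arrow.exists_meshMiddle_eq {p : Fin n × ℕ} {x : Fin n} {r : ℕ}
    (h : Arrow H p (x, r + 1)) : ∃ i, meshWeight H x i ≠ 0 ∧ p = meshMiddle r i := by
  cases h with
  | up α _ => exact ⟨.inl _, (Fintype.card_pos_iff.mpr ⟨α⟩).ne', rfl⟩
  | down α _ => exact ⟨.inr _, (Fintype.card_pos_iff.mpr ⟨α⟩).ne', rfl⟩

theorem sum_meshWeight (x : Fin n) :
    ∑ i, meshWeight H x i = ∑ y, (Fintype.card (H x y) + Fintype.card (H y x)) := by
  rw [Fintype.sum_sum_type, sum_add_distrib]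
  rfl

theorem sum_meshWeight_nsmul {M : Type*} [AddCommMonoid M] (f : Fin n × ℕ → M) (x : Fin n)
    (r : ℕ) : ∑ i, meshWeight H x i • f (meshMiddle r i) =
      ∑ y, Fintype.card (H x y) • f (y, r + 1) + ∑ y, Fintype.card (H y x) • f (y, r) :=
  Fintype.sum_sum_type _

theorem nonneg_and_arrow_monotone {R : Type*} [AddCommGroup R] [LinearOrder R]
    [IsOrderedAddMonoid R] (hdir : ∀ a b : Fin n, H a b → (b : ℕ) < a) (hb : CondB H)
    {N : ℕ} (hN : n ≤ N) {f : Fin n × ℕ → R}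
    (hlow : ∀ q, index q < N → f q = 0) (hat : ∀ q, index q = N → 0 ≤ f q)
    (hmesh : ∀ x r, N < index (x, r + 1) →
      f (x, r + 1) = ∑ i, meshWeight H x i • f (meshMiddle r i) - f (x, r))
    (q : Fin n × ℕ) : 0 ≤ f q ∧ ∀ p, Arrow H p q → f p ≤ f q := by
  induction q using (measure index).wf.induction with | _ q ih => ?_
  rcases le_or_gt (index q) N with hq | hq
  · have hnonneg : 0 ≤ f q := hq.lt_or_eq.elim (fun h => (hlow q h).ge) (hat q)
    exact ⟨hnonneg, fun p hp => (hlow p ((hp.index_lt hdir).trans_le hq)).trans_le hnonneg⟩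
  obtain ⟨x, _ | r⟩ := q
  · have := x.isLt
    simp only [index] at hq
    omega
  have hw : 2 ≤ ∑ i, meshWeight H x i := by
    rw [sum_meshWeight]
    exact hb x
  have hM : 0 ≤ f (x, r) := (ih (x, r) <| show index (x, r) < index (x, r + 1) by
    simp only [index, Nat.succ_mul]
    have := x.pos
    omega).1
  have hle : ∀ i, meshWeight H x i ≠ 0 → f (x, r) ≤ f (meshMiddle r i) := fun i hi =>
    have ⟨hin, hout⟩ := arrow_meshMiddle (r := r) hi
    (ih _ (hout.index_lt hdir)).2 _ hin
  have hmid : ∀ i, meshWeight H x i ≠ 0 → f (meshMiddle r i) ≤ f (x, r + 1) := fun i hi => by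
    rw [hmesh x r hq]
    exact le_sum_nsmul_sub_of_two_le_sum hM hle hw hi
  obtain ⟨i, -, hi⟩ := exists_ne_zero_of_sum_ne_zero (two_pos.trans_le hw).ne'
  refine ⟨hM.trans ((hle i hi).trans (hmid i hi)), fun p hp => ?_⟩
  obtain ⟨j, hj, rfl⟩ := hp.exists_meshMiddle_eq
  exact hmid j hj

end Preprojective

open Preprojective in
theorem d_recursion_nonneg_general {n : ℕ}
    (H : Fin n → Fin n → Type) [∀ a b, Fintype (H a b)]
    (hdir : ∀ (a b : Fin n), H a b → (b : ℕ) < (a : ℕ))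
    (hb : CondB H)
    (a : Fin n) (d : ℕ → ℤ)
    (h0 : ∀ (x : Fin n) (r : ℕ), (x : ℕ) + r * n < (a : ℕ) + n →
      d ((x : ℕ) + r * n) = 0)
    (h1 : d ((a : ℕ) + n) = 1)
    (h2 : ∀ (x : Fin n) (r : ℕ), (a : ℕ) + n < (x : ℕ) + (r + 1) * n →
      d ((x : ℕ) + (r + 1) * n) =
        (∑ y : Fin n, (Fintype.card (H x y) : ℤ) * d ((y : ℕ) + (r + 1) * n)) +
        (∑ y : Fin n, (Fintype.card (H y x) : ℤ) * d ((y : ℕ) + r * n)) -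
        d ((x : ℕ) + r * n)) :
    ∀ m : ℕ, 0 ≤ d m := by
  intro m
  have hmesh (x : Fin n) (r : ℕ) (h : (a : ℕ) + n < index (x, r + 1)) :
      d (index (x, r + 1)) =
        ∑ i, meshWeight H x i • d (index (meshMiddle r i)) - d (index (x, r)) := by
    rw [sum_meshWeight_nsmul (fun q => d (index q))]
    simpa only [index, nsmul_eq_mul] using h2 x r h
  have key := nonneg_and_arrow_monotone hdir hb (N := a + n) (f := fun q => d (index q)) (by omega)
    (fun q => h0 q.1 q.2) (fun q hq => by simp only [hq, h1, zero_le_one]) hmesh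
    (⟨m % n, Nat.mod_lt m a.pos⟩, m / n)
  simpa only [index, Nat.mod_add_div'] using key.1

/-- Let `Q` be a finite connected acyclic quiver with vertex
set `{0, …, n-1}` (arrows going from larger to smaller indices) satisfying
condition (b).  Writing `m = x + r·n` (so that `m` encodes the module
`τ^{-r} P(x)`), the sequence `d_a` determined by the recursion
`d_a(x + rn) = 0` for `x + rn < a + n`, `d_a(a + n) = 1`, and
`d_a(x + rn) = Σ_{α : x → t(α)} d_a(t(α) + rn) + Σ_{β : s(β) → x} d_a(s(β) + (r-1)n) − d_a(x + (r-1)n)`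
for `x + rn > a + n`, takes only non-negative values. -/
theorem d_recursion_nonneg {n : ℕ} (hn : 0 < n)
    (H : Fin n → Fin n → Type) [∀ a b, Fintype (H a b)]
    (hdir : ∀ (a b : Fin n), H a b → (b : ℕ) < (a : ℕ))
    (hb : CondB H)
    (a : Fin n) (d : ℕ → ℤ)
    (h0 : ∀ (x : Fin n) (r : ℕ), (x : ℕ) + r * n < (a : ℕ) + n →
      d ((x : ℕ) + r * n) = 0)
    (h1 : d ((a : ℕ) + n) = 1)
    (h2 : ∀ (x : Fin n) (r : ℕ), (a : ℕ) + n < (x : ℕ) + (r + 1) * n →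
      d ((x : ℕ) + (r + 1) * n) =
        (∑ y : Fin n, (Fintype.card (H x y) : ℤ) * d ((y : ℕ) + (r + 1) * n)) +
        (∑ y : Fin n, (Fintype.card (H y x) : ℤ) * d ((y : ℕ) + r * n)) -
        d ((x : ℕ) + r * n)) :
    ∀ m : ℕ, 0 ≤ d m :=
  d_recursion_nonneg_general H hdir hb a d h0 h1 h2
end

section
/- If T → T' is an arrow in the pre-projective tilting quiver of Q (with Q satisfying condition (b)), writing T = ⊕τ^{-r_i}P(i) and T' = ⊕τ^{-r'_i}P(i), then there is exactly one vertex i with r'_i = r_i + 1 and r'_j = r_j for all j ≠ i. -/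
/-! The key object is, for `r ∈ L(Q)` and a vertex `k`, the least element of `L(Q)` that lies
above `r` and exceeds it at `k`, namely `j ↦ max (r j) (r k + 1 - l_Q(j,k))`. If `r'` covers
`r`, this element is `r'` itself for every `k` with `r k < r' k`; so `r'` exceeds `r` by exactly
one at each such `k`. Two such vertices `i ≠ k` would be tight in both directions,
`r i + l_Q(i,k) ≤ r k` and `r k + l_Q(k,i) ≤ r i`, forcing `l_Q(i,k) + l_Q(k,i) = 0`, i.e. an
oriented cycle through `i` and `k`. -/

section Walks

variable {V : Type} {H : V → V → Type}

def DWalk.comp : {a b c : V} → DWalk H a b → DWalk H b c → DWalk H a c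
  | _, _, _, w, .nil _ => w
  | _, _, _, w, .fwd w' e => .fwd (w.comp w') e
  | _, _, _, w, .bwd w' e => .bwd (w.comp w') e

lemma DWalk.cplus_comp {a b c : V} (w : DWalk H a b) (w' : DWalk H b c) :
    (w.comp w').cplus = w.cplus + w'.cplus := by
  induction w' with
  | nil => simp [DWalk.comp, DWalk.cplus]
  | fwd w'' e ih => simp only [DWalk.comp, DWalk.cplus, ih, Nat.add_assoc]
  | bwd w'' e ih => simp only [DWalk.comp, DWalk.cplus, ih]

def QPath.comp : {a b c : V} → QPath H a b → QPath H b c → QPath H a c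
  | _, _, _, p, .nil _ => p
  | _, _, _, p, .cons q e => .cons (p.comp q) e

lemma QPath.length_comp {a b c : V} (p : QPath H a b) (q : QPath H b c) :
    (p.comp q).length = p.length + q.length := by
  induction q with
  | nil => simp [QPath.comp, QPath.length]
  | cons q' e ih => simp only [QPath.comp, QPath.length, ih, Nat.add_assoc]

lemma QPath.eq_of_length_eq_zero {a b : V} (p : QPath H a b) (h : p.length = 0) : a = b := by
  cases p with
  | nil => rfl
  | cons p' e => simp [QPath.length] at h

/-- A walk using only backward arrows is a directed path read in reverse; the accumulator `p`
lets the induction extend paths at their end. -/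
lemma DWalk.nonempty_qpath_of_cplus_eq_zero {a b : V} (w : DWalk H a b) (hw : w.cplus = 0)
    {x : V} (p : QPath H x b) : Nonempty (QPath H x a) := by
  induction w generalizing x with
  | nil => exact ⟨p⟩
  | fwd w' e ih => simp [DWalk.cplus] at hw
  | bwd w' e ih => exact ih (by simpa [DWalk.cplus] using hw) (p.cons e)

end Walks

section Ell

variable {V : Type} {H : V → V → Type}

lemma ell_le_cplus {i j : V} (w : DWalk H i j) : ell H i j ≤ w.cplus :=
  Nat.sInf_le ⟨w, rfl⟩

lemma ell_self (i : V) : ell H i i = 0 := by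
  simpa [DWalk.cplus] using ell_le_cplus (DWalk.nil (H := H) i)

lemma exists_dwalk_cplus_eq_ell (hconn : QuiverConnected H) (i j : V) :
    ∃ w : DWalk H i j, w.cplus = ell H i j :=
  let ⟨w⟩ := hconn i j
  Nat.sInf_mem (s := {m | ∃ w : DWalk H i j, w.cplus = m}) ⟨w.cplus, w, rfl⟩

lemma ell_triangle (hconn : QuiverConnected H) (i j k : V) :
    ell H i k ≤ ell H i j + ell H j k := by
  obtain ⟨w₁, hw₁⟩ := exists_dwalk_cplus_eq_ell hconn i j
  obtain ⟨w₂, hw₂⟩ := exists_dwalk_cplus_eq_ell hconn j k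
  simpa only [DWalk.cplus_comp, hw₁, hw₂] using ell_le_cplus (w₁.comp w₂)

lemma eq_of_ell_add_ell_eq_zero (hacyc : QuiverAcyclic H) (hconn : QuiverConnected H)
    {i j : V} (h : ell H i j + ell H j i = 0) : i = j := by
  obtain ⟨w₁, hw₁⟩ := exists_dwalk_cplus_eq_ell hconn i j
  obtain ⟨w₂, hw₂⟩ := exists_dwalk_cplus_eq_ell hconn j i
  obtain ⟨p⟩ := w₁.nonempty_qpath_of_cplus_eq_zero (by omega) (.nil j)
  obtain ⟨q⟩ := w₂.nonempty_qpath_of_cplus_eq_zero (by omega) (.nil i)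
  have hcycle := hacyc j (p.comp q)
  rw [QPath.length_comp] at hcycle
  exact (p.eq_of_length_eq_zero (by omega)).symm

end Ell

section Raise

variable {V : Type} {H : V → V → Type}

noncomputable def raise (H : V → V → Type) (r : V → ℕ) (k : V) : V → ℕ :=
  fun j => max (r j) (r k + 1 - ell H j k)

lemma le_raise (r : V → ℕ) (k j : V) : r j ≤ raise H r k j :=
  le_max_left _ _

lemma raise_self (r : V → ℕ) (k : V) : raise H r k k = r k + 1 := by
  simp [raise, ell_self]

lemma raise_mem_lSet (hconn : QuiverConnected H) {r : V → ℕ} (hr : r ∈ LSet H) (k : V) :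
    raise H r k ∈ LSet H := by
  intro i j
  have hrij := hr i j
  have htri := ell_triangle hconn i j k
  simp only [raise]
  omega

lemma raise_le {r r' : V → ℕ} (hr' : r' ∈ LSet H) (hle : ∀ i, r i ≤ r' i) {k : V}
    (hk : r k < r' k) (j : V) : raise H r k j ≤ r' j := by
  have hjk := hr' j k
  have hrj := hle j
  simp only [raise]
  omega

lemma add_ell_le_of_lt_raise {r : V → ℕ} {k j : V} (h : r j < raise H r k j) :
    r j + ell H j k ≤ r k := by
  simp only [raise] at h
  omega

lemma raise_injective (hacyc : QuiverAcyclic H) (hconn : QuiverConnected H) (r : V → ℕ) :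
    Function.Injective (raise H r) := by
  intro i k hik
  have hi : r i < raise H r k i := by rw [← hik, raise_self]; omega
  have hk : r k < raise H r i k := by rw [hik, raise_self]; omega
  have := add_ell_le_of_lt_raise hi
  have := add_ell_le_of_lt_raise hk
  exact eq_of_ell_add_ell_eq_zero hacyc hconn (by omega)

lemma raise_eq_of_covers (hconn : QuiverConnected H) {r r' : V → ℕ}
    (hr : r ∈ LSet H) (hr' : r' ∈ LSet H) (hle : ∀ i, r i ≤ r' i)
    (hcov : ∀ t ∈ LSet H, (∀ i, r i ≤ t i) → (∀ i, t i ≤ r' i) → t = r ∨ t = r')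
    {k : V} (hk : r k < r' k) : raise H r k = r' := by
  refine (hcov _ (raise_mem_lSet hconn hr k) (le_raise r k) (raise_le hr' hle hk)).resolve_left ?_
  intro h
  have := congrFun h k
  rw [raise_self] at this
  omega

end Raise

theorem tilting_arrow_single_mutation_general {V : Type}
    (H : V → V → Type)
    (hacyc : QuiverAcyclic H) (hconn : QuiverConnected H)
    (r r' : V → ℕ) (hr : r ∈ LSet H) (hr' : r' ∈ LSet H)
    (hle : ∀ i, r i ≤ r' i) (hne : r ≠ r')
    (hcov : ∀ t ∈ LSet H, (∀ i, r i ≤ t i) → (∀ i, t i ≤ r' i) → t = r ∨ t = r') :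
    ∃! i : V, r' i = r i + 1 ∧ ∀ j, j ≠ i → r' j = r j := by
  have hraise : ∀ {k}, r k < r' k → raise H r k = r' := raise_eq_of_covers hconn hr hr' hle hcov
  have hunique : ∀ {i k}, r i < r' i → r k < r' k → k = i := fun hi hk =>
    raise_injective hacyc hconn r ((hraise hk).trans (hraise hi).symm)
  obtain ⟨i, hi⟩ : ∃ i, r i < r' i := by
    by_contra! h
    exact hne (funext fun j => le_antisymm (hle j) (h j))
  refine ⟨i, ⟨?_, fun j hj => ?_⟩, fun k hk => hunique hi (by omega)⟩
  · rw [← hraise hi, raise_self]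
  · by_contra hrj
    exact hj (hunique hi (lt_of_le_of_ne (hle j) (Ne.symm hrj)))

/-- Let `Q` be a finite connected acyclic quiver in which every
vertex meets at least two arrows.  If `T → T'` is an arrow in the pre-projective
tilting quiver, i.e. (in combinatorial form) if `(r_i)` covers `(r'_i)` in the
poset `(L(Q), ≥^op)` (coordinatewise `≤` reversed), then there is exactly one
vertex `i` with `r'_i = r_i + 1` and `r'_j = r_j` for all `j ≠ i`. -/
theorem tilting_arrow_single_mutation {V : Type} [Fintype V]
    (H : V → V → Type) [∀ a b, Fintype (H a b)]
    (hacyc : QuiverAcyclic H) (hconn : QuiverConnected H) (hb : CondB H)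
    (r r' : V → ℕ) (hr : r ∈ LSet H) (hr' : r' ∈ LSet H)
    (hle : ∀ i, r i ≤ r' i) (hne : r ≠ r')
    (hcov : ∀ t ∈ LSet H, (∀ i, r i ≤ t i) → (∀ i, t i ≤ r' i) → t = r ∨ t = r') :
    ∃! i : V, r' i = r i + 1 ∧ ∀ j, j ≠ i → r' j = r j :=
  tilting_arrow_single_mutation_general H hacyc hconn r r' hr hr' hle hne hcov
end

section
/- Assume Q has a unique source s and satisfies condition (b). Then the set L(Q) ∩ {(r_i) : r_s = 0}, parametrizing pre-projective tilting modules containing P(s), has cardinality at most 2^{n-1}, where n = #Q₀. -/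
/-! Since `s` is the only source, every vertex `i ≠ s` receives an arrow `t i → i`; this arrow
and its reverse give `r (t i) ≤ r i ≤ r (t i) + 1` for `r ∈ L(Q)`. As `Q` is acyclic, following
`t` from any vertex ends at `s`, so a point with `r s = 0` is determined by the `n - 1` bits
`r i = r (t i) + 1`. -/

theorem WellFounded.eq_of_increments_eq {V α : Type*} [Add α] {R : V → V → Prop}
    (hwf : WellFounded R) {s : V} {t : V → V} (ht : ∀ i ≠ s, R (t i) i) (c : V → α) {r r' : V → α}
    (hr : ∀ i ≠ s, r i = r (t i) + c i) (hr' : ∀ i ≠ s, r' i = r' (t i) + c i)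
    (hs : r s = r' s) : r = r' := by
  funext i
  induction i using hwf.induction with
  | _ i ih =>
    by_cases hi : i = s
    · rwa [hi]
    · rw [hr i hi, hr' i hi, ih (t i) (ht i hi)]

section Quiver

variable {V : Type} {H : V → V → Type}

theorem ell_le_one_of_arrow {a b : V} (e : H a b) : ell H a b ≤ 1 :=
  Nat.sInf_le ⟨.fwd (.nil a) e, by simp [DWalk.cplus]⟩

theorem ell_eq_zero_of_arrow {a b : V} (e : H b a) : ell H a b = 0 :=
  Nat.le_zero.mp (Nat.sInf_le ⟨.bwd (.nil a) e, by simp [DWalk.cplus]⟩)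

theorem LSet.le_of_arrow {r : V → ℕ} (hr : r ∈ LSet H) {a b : V} (e : H a b) : r a ≤ r b := by
  simpa [ell_eq_zero_of_arrow e] using hr b a

theorem LSet.le_add_one_of_arrow {r : V → ℕ} (hr : r ∈ LSet H) {a b : V} (e : H a b) :
    r b ≤ r a + 1 :=
  (hr a b).trans (Nat.add_le_add_left (ell_le_one_of_arrow e) _)

theorem LSet.eq_add_ite_of_arrow {r : V → ℕ} (hr : r ∈ LSet H) {a b : V} (e : H a b) :
    r b = r a + if r b = r a + 1 then 1 else 0 := by
  have := LSet.le_of_arrow hr e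
  have := LSet.le_add_one_of_arrow hr e
  split_ifs <;> omega

theorem exists_qPath_of_transGen {a b : V}
    (h : Relation.TransGen (fun x y => Nonempty (H x y)) a b) :
    ∃ p : QPath H a b, p.length ≠ 0 := by
  induction h with
  | single e => exact ⟨.cons (.nil _) e.some, by simp [QPath.length]⟩
  | tail _ e ih =>
    obtain ⟨p, -⟩ := ih
    exact ⟨.cons p e.some, by simp [QPath.length]⟩

theorem QuiverAcyclic.wellFounded [Finite V] (h : QuiverAcyclic H) :
    WellFounded (fun a b => Nonempty (H a b)) := by
  let R := Relation.TransGen fun a b => Nonempty (H a b)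
  have : IsTrans V R := ⟨fun _ _ _ => Relation.TransGen.trans⟩
  have : Std.Irrefl R := ⟨fun a ha => (exists_qPath_of_transGen ha).elim fun p hp => hp (h a p)⟩
  exact Subrelation.wf (fun h => Relation.TransGen.single h)
    (Finite.wellFounded_of_trans_of_irrefl R)

theorem UniqueSource.exists_arrow_to {s : V} (hs : UniqueSource H s) {i : V} (hi : i ≠ s) :
    ∃ j, Nonempty (H j i) := by
  by_contra! h
  exact hi (hs.2 i h)

theorem UniqueSource.exists_parent {s : V} (hs : UniqueSource H s) :
    ∃ t : V → V, ∀ i ≠ s, Nonempty (H (t i) i) := by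
  classical
  exact ⟨fun i => if hi : i = s then s else (hs.exists_arrow_to hi).choose,
    fun i hi => by simpa [hi] using (hs.exists_arrow_to hi).choose_spec⟩

theorem LSet.injOn_ascents [Finite V] (hacyc : QuiverAcyclic H) {s : V}
    {t : V → V} (ht : ∀ i ≠ s, Nonempty (H (t i) i)) :
    Set.InjOn (fun r (i : {i // i ≠ s}) => decide (r i.1 = r (t i.1) + 1))
      {r : V → ℕ | r ∈ LSet H ∧ r s = 0} := by
  intro r hr r' hr' hrr'
  have hinc : ∀ i (hi : i ≠ s), (r i = r (t i) + 1) ↔ (r' i = r' (t i) + 1) := fun i hi => by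
    simpa using congrFun hrr' ⟨i, hi⟩
  refine hacyc.wellFounded.eq_of_increments_eq ht
    (fun i => if r i = r (t i) + 1 then 1 else 0) (fun i hi => ?_) (fun i hi => ?_)
    (hr.2.trans hr'.2.symm)
  · exact LSet.eq_add_ite_of_arrow hr.1 (ht i hi).some
  · simp only [hinc i hi]
    exact LSet.eq_add_ite_of_arrow hr'.1 (ht i hi).some

end Quiver

theorem lk_source_card_le_general {V : Type} [Fintype V]
    (H : V → V → Type) [∀ a b, Fintype (H a b)]
    (hacyc : QuiverAcyclic H)
    (s : V) (hs : UniqueSource H s) :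
    {r : V → ℕ | r ∈ LSet H ∧ r s = 0}.Finite ∧
      Nat.card {r : V → ℕ | r ∈ LSet H ∧ r s = 0} ≤ 2 ^ (Fintype.card V - 1) := by
  classical
  obtain ⟨t, ht⟩ := hs.exists_parent
  have hinj := Set.injOn_iff_injective.mp (LSet.injOn_ascents hacyc ht)
  have : Finite {r : V → ℕ | r ∈ LSet H ∧ r s = 0} := Finite.of_injective _ hinj
  refine ⟨Set.toFinite _, ?_⟩
  calc Nat.card {r : V → ℕ | r ∈ LSet H ∧ r s = 0}
      ≤ Nat.card ({i // i ≠ s} → Bool) := Nat.card_le_card_of_injective _ hinj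
    _ = 2 ^ (Fintype.card V - 1) := by
      rw [Nat.card_eq_fintype_card, Fintype.card_fun, Fintype.card_bool,
        Fintype.card_subtype_compl, Fintype.card_subtype_eq]

/-- Assume the finite connected acyclic quiver `Q` (with `n`
vertices) has a unique source `s` and satisfies condition (b).  Then the set
`L(Q) ∩ {(r_i) : r_s = 0}`, parametrizing the pre-projective tilting modules
containing `P(s)`, is finite of cardinality at most `2^(n-1)`. -/
theorem lk_source_card_le {V : Type} [Fintype V]
    (H : V → V → Type) [∀ a b, Fintype (H a b)]
    (hacyc : QuiverAcyclic H) (hconn : QuiverConnected H) (hb : CondB H)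
    (s : V) (hs : UniqueSource H s) :
    {r : V → ℕ | r ∈ LSet H ∧ r s = 0}.Finite ∧
      Nat.card {r : V → ℕ | r ∈ LSet H ∧ r s = 0} ≤ 2 ^ (Fintype.card V - 1) :=
  lk_source_card_le_general H hacyc s hs
end

section
/- Let K be a full subquiver of the Hasse diagram C^n of ({0,1}^n, ≤) satisfying: (i) (0,...,0),(1,...,1) ∈ K₀; (ii) for any T > T' in K₀ there is a path from T to T' in K; (iii) K₀ is closed under coordinatewise min and max. If K decomposes as K = K(1) ⃗⨿ K(2) with minimal element T of K(1) and maximal element T' of K(2), then T is the componentwise characteristic vector T(i) for some coordinate i with T_i = 0, T'_i = 1, and every element of K₀ is comparable to T. -/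
/-!
The top `T` of the lower block and the bottom `T'` of the upper block satisfy `T < T'`, so a
Hasse path from `T` to `T'` inside `K` has a first step `T ⋖ a`. Maximality of `T` puts `a` in the
upper block, so `T < T' ≤ a`, and the covering forces `a = T'`. Hence `T'` is `T` with one
coordinate `i` raised from `0` to `1`: every element of `K` with `i`-th coordinate `0` lies in the
lower block, below `T`, and every other one lies above `T' > T`.
-/

open Relation

theorem Pi.bool_covBy_of_le_of_existsUnique_ne {ι : Type*} {a b : ι → Bool} (hab : a ≤ b)
    (h : ∃! i, a i ≠ b i) : a ⋖ b := by
  obtain ⟨i, hi, huniq⟩ := h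
  obtain ⟨hai, hbi⟩ := Bool.lt_iff.1 (lt_of_le_of_ne (hab i) hi)
  refine Pi.covBy_iff.2 ⟨i, ?_, fun j hj => not_not.1 (mt (huniq j) hj)⟩
  rw [hai, hbi]
  exact bot_covBy_top

theorem IsGreatest.covBy_of_reflTransGen {α : Type*} [PartialOrder α] {s t : Set α} {a b : α}
    (ha : IsGreatest s a) (hb : IsLeast t b) (hab : a < b)
    (h : ReflTransGen (fun x y => y ∈ s ∪ t ∧ x ⋖ y) a b) : a ⋖ b := by
  rcases h.cases_head with rfl | ⟨c, ⟨hc, hac⟩, -⟩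
  · exact absurd hab (lt_irrefl _)
  obtain rfl : b = c := by
    rcases hc with hcs | hct
    · exact absurd (ha.2 hcs) hac.lt.not_ge
    · exact (hac.eq_or_eq hab.le (hb.2 hct)).resolve_left hab.ne'
  exact hac

theorem decomposition_characteristic_vector_general {n : ℕ}
    (K K1 K2 : Set (Fin n → Bool))
    (hpath : ∀ T ∈ K, ∀ T' ∈ K, T ≤ T' →
      Relation.ReflTransGen
        (fun a b => a ∈ K ∧ b ∈ K ∧ a ≤ b ∧ ∃! i : Fin n, a i ≠ b i) T T')
    (hunion : K = K1 ∪ K2) (hdisj : Disjoint K1 K2)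
    (hdom : ∀ S1 ∈ K1, ∀ S2 ∈ K2, S1 ≤ S2)
    (T : Fin n → Bool) (hT : T ∈ K1 ∧ ∀ S ∈ K1, S ≤ T)
    (T' : Fin n → Bool) (hT' : T' ∈ K2 ∧ ∀ S ∈ K2, T' ≤ S) :
    ∃ i : Fin n, T i = false ∧ T' i = true ∧
      (∀ S ∈ K, S i = false → S ≤ T) ∧ (∀ S ∈ K, S ≤ T ∨ T ≤ S) := by
  obtain ⟨hT1, hTmax⟩ := hT
  obtain ⟨hT'2, hT'min⟩ := hT'
  subst hunion
  have hlt : T < T' := lt_of_le_of_ne (hdom T hT1 T' hT'2) (hdisj.ne_of_mem hT1 hT'2)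
  have hcover_path : ReflTransGen (fun x y => y ∈ K1 ∪ K2 ∧ x ⋖ y) T T' :=
    ReflTransGen.mono (fun _ _ ⟨_, hy, hxy, huniq⟩ =>
      ⟨hy, Pi.bool_covBy_of_le_of_existsUnique_ne hxy huniq⟩) _ _
      (hpath T (.inl hT1) T' (.inr hT'2) hlt.le)
  have hcov : T ⋖ T' := IsGreatest.covBy_of_reflTransGen ⟨hT1, fun S hS => hTmax S hS⟩
    ⟨hT'2, fun S hS => hT'min S hS⟩ hlt hcover_path
  obtain ⟨i, hi, -⟩ := Pi.covBy_iff.1 hcov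
  obtain ⟨hTi, hT'i⟩ := Bool.lt_iff.1 hi.lt
  refine ⟨i, hTi, hT'i, ?_, ?_⟩
  · rintro S (hS | hS) hSi
    · exact hTmax S hS
    · exact absurd (hT'min S hS i) (by simp [hSi, hT'i])
  · rintro S (hS | hS)
    · exact .inl (hTmax S hS)
    · exact .inr (hlt.le.trans (hT'min S hS))

/-- Let `K` be (the vertex set of) a full subquiver of the
Hasse diagram `C^n` of the Boolean lattice `({0,1}^n, ≤)` satisfying:
(i) the bottom `(0,…,0)` and top `(1,…,1)` belong to `K`;
(ii) any order relation between elements of `K` is witnessed by a directed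
path inside `K` (single-coordinate steps);
(iii) `K` is closed under coordinatewise `min` and `max`.
Suppose `K` decomposes as `K = K(1) ⃗⨿ K(2)` (a partition in which every
element of `K(1)` lies below every element of `K(2)` in the coordinatewise
order, i.e. above it in the tilting order), with `T` the minimal element of
`K(1)` in the tilting order (the coordinatewise-largest element of `K(1)`) and
`T'` the maximal element of `K(2)` in the tilting order (the
coordinatewise-smallest element of `K(2)`).  Then there is a coordinate `i`
with `T_i = 0` and `T'_i = 1` such that `T` is the componentwise characteristic
vector `T(i)` (the largest element of `K` whose `i`-th coordinate vanishes),
and every element of `K` is comparable to `T`. -/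
theorem decomposition_characteristic_vector {n : ℕ}
    (K K1 K2 : Set (Fin n → Bool))
    (hbot : (fun _ => false) ∈ K) (htop : (fun _ => true) ∈ K)
    (hpath : ∀ T ∈ K, ∀ T' ∈ K, T ≤ T' →
      Relation.ReflTransGen
        (fun a b => a ∈ K ∧ b ∈ K ∧ a ≤ b ∧ ∃! i : Fin n, a i ≠ b i) T T')
    (hclosed : ∀ T ∈ K, ∀ T' ∈ K,
      (fun i => T i && T' i) ∈ K ∧ (fun i => T i || T' i) ∈ K)
    (hunion : K = K1 ∪ K2) (hdisj : Disjoint K1 K2)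
    (hK1 : K1.Nonempty) (hK2 : K2.Nonempty)
    (hdom : ∀ S1 ∈ K1, ∀ S2 ∈ K2, S1 ≤ S2)
    (T : Fin n → Bool) (hT : T ∈ K1 ∧ ∀ S ∈ K1, S ≤ T)
    (T' : Fin n → Bool) (hT' : T' ∈ K2 ∧ ∀ S ∈ K2, T' ≤ S) :
    ∃ i : Fin n, T i = false ∧ T' i = true ∧
      (∀ S ∈ K, S i = false → S ≤ T) ∧ (∀ S ∈ K, S ≤ T ∨ T ≤ S) :=
  decomposition_characteristic_vector_general K K1 K2 hpath hunion hdisj hdom T hT T' hT'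
end

section
/- Let 𝒜° be the set of finite connected acyclic quivers with a unique source, every vertex meeting at least two arrows, and l(Q) ≤ 1. The relation Q ⇝ Q' (删除 one arrow α where either s(α) is not a source or t(α) is not a sink and there is another path from s(α) to t(α), or s(α) is a source, t(α) a sink with ≥3 paths and ≥2 parallel arrows between them) preserves l_Q: if Q ⇝ Q' then l_Q(i,j) = l_{Q'}(i,j) for all vertices i,j. -/
/-! Quivers are encoded here by their arrow-multiplicity function
`G : V → V → ℕ` (`G a b` = number of arrows `a → b`); the function `l_Q`
only depends on the underlying adjacency relation `fun a b => 0 < G a b`. -/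

/-- Walks in the double quiver of the quiver with adjacency relation `E`. -/
inductive RWalk {V : Type} (E : V → V → Prop) : V → V → Type where
  | nil : (a : V) → RWalk E a a
  | fwd : {a b c : V} → RWalk E a b → E b c → RWalk E a c
  | bwd : {a b c : V} → RWalk E a b → E c b → RWalk E a c

/-- `c⁺(w)`: the number of forward arrows used by a walk. -/
def RWalk.cplus {V : Type} {E : V → V → Prop} : {a b : V} → RWalk E a b → ℕ
  | _, _, .nil _ => 0
  | _, _, .fwd w _ => RWalk.cplus w + 1
  | _, _, .bwd w _ => RWalk.cplus w

/-- `l_Q(i,j)`: minimal number of forward arrows over walks from `i` to `j`. -/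
noncomputable def rell {V : Type} (E : V → V → Prop) (i j : V) : ℕ :=
  sInf {m | ∃ w : RWalk E i j, RWalk.cplus w = m}

/-- Directed paths in the quiver. -/
inductive RPath {V : Type} (E : V → V → Prop) : V → V → Type where
  | nil : (a : V) → RPath E a a
  | cons : {a b c : V} → RPath E a b → E b c → RPath E a c

def RPath.length {V : Type} {E : V → V → Prop} : {a b : V} → RPath E a b → ℕ
  | _, _, .nil _ => 0
  | _, _, .cons p _ => RPath.length p + 1

/-! Because `l(Q) ≤ 1`, every value `l_Q(i, j)` is `0` or `1`: it is `0` exactly when `j`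
reaches `i` by a directed path, and otherwise it is witnessed by an arrow `a → b` with `a ⇝ i`
and `j ⇝ b`. If `α : x → y` has a parallel arrow, deleting it changes no adjacency. Otherwise
there is a path `x ⇝ y` of length `≥ 2`, which by acyclicity avoids `α`, so reachability is
unchanged. When `α` is the only witness for `l_Q(i, j) = 1`, a predecessor `z` of `x` gives a
new witness through `l_Q(z, j) ≤ 1` (dually a successor of `y`, through `l_Q(i, z) ≤ 1`);
acyclicity guarantees that this witness is not `α`. -/

open Relation

section

variable {V : Type} {E : V → V → Prop}

lemma RPath.reflTransGen {a b : V} : RPath E a b → ReflTransGen E a b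
  | .nil _ => .refl
  | .cons p e => p.reflTransGen.tail e

lemma Relation.ReflTransGen.nonempty_rpath {a b : V} (h : ReflTransGen E a b) :
    Nonempty (RPath E a b) := by
  induction h with
  | refl => exact ⟨.nil a⟩
  | tail _ e ih => exact ⟨.cons ih.some e⟩

lemma not_reflTransGen_of_acyclic (hacyc : ∀ (a : V) (p : RPath E a a), p.length = 0)
    {a b : V} (e : E a b) : ¬ ReflTransGen E b a := fun h => by
  obtain ⟨p⟩ := h.nonempty_rpath
  simpa [RPath.length] using hacyc b (.cons p e)

lemma RWalk.exists_extend_bwd {i b c : V} (w : RWalk E i b) (h : ReflTransGen E c b) :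
    ∃ w' : RWalk E i c, w'.cplus = w.cplus := by
  induction h using ReflTransGen.head_induction_on with
  | refl => exact ⟨w, rfl⟩
  | head e _ ih =>
    obtain ⟨w', hw'⟩ := ih
    exact ⟨.bwd w' e, by simpa [RWalk.cplus] using hw'⟩

lemma RWalk.exists_cplus_eq_zero_iff {i j : V} :
    (∃ w : RWalk E i j, w.cplus = 0) ↔ ReflTransGen E j i := by
  refine ⟨?_, fun h => by simpa [RWalk.cplus] using RWalk.exists_extend_bwd (.nil i) h⟩
  rintro ⟨w, hw⟩
  induction w with
  | nil => exact .refl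
  | fwd => simp [RWalk.cplus] at hw
  | bwd w e ih => exact (ih (by simpa [RWalk.cplus] using hw)).head e

lemma RWalk.exists_cplus_eq_one_iff {i j : V} :
    (∃ w : RWalk E i j, w.cplus = 1) ↔
      ∃ a b, E a b ∧ ReflTransGen E a i ∧ ReflTransGen E j b := by
  constructor
  · rintro ⟨w, hw⟩
    induction w with
    | nil => simp [RWalk.cplus] at hw
    | @fwd a b w e _ =>
      refine ⟨a, b, e, RWalk.exists_cplus_eq_zero_iff.1 ⟨w, ?_⟩, .refl⟩
      simpa [RWalk.cplus] using hw
    | bwd w e ih =>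
      obtain ⟨a, b, hab, hai, hjb⟩ := ih (by simpa [RWalk.cplus] using hw)
      exact ⟨a, b, hab, hai, hjb.head e⟩
  · rintro ⟨a, b, hab, hai, hjb⟩
    obtain ⟨w, hw⟩ := RWalk.exists_cplus_eq_zero_iff.2 hai
    obtain ⟨w', hw'⟩ := RWalk.exists_extend_bwd (.fwd w hab) hjb
    exact ⟨w', by rw [hw', RWalk.cplus, hw]⟩

lemma RWalk.exists_cplus_le_one_iff {i j : V} :
    (∃ w : RWalk E i j, w.cplus ≤ 1) ↔
      ReflTransGen E j i ∨ ∃ a b, E a b ∧ ReflTransGen E a i ∧ ReflTransGen E j b := by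
  rw [← RWalk.exists_cplus_eq_zero_iff, ← RWalk.exists_cplus_eq_one_iff]
  constructor
  · rintro ⟨w, hw⟩
    rcases Nat.le_one_iff_eq_zero_or_eq_one.1 hw with h | h
    exacts [.inl ⟨w, h⟩, .inr ⟨w, h⟩]
  · rintro (⟨w, hw⟩ | ⟨w, hw⟩) <;> exact ⟨w, by omega⟩

lemma rell_le_iff {i j : V} (h : Nonempty (RWalk E i j)) (n : ℕ) :
    rell E i j ≤ n ↔ ∃ w : RWalk E i j, w.cplus ≤ n := by
  constructor
  · intro hn
    obtain ⟨w, hw⟩ := Nat.sInf_mem (s := {m | ∃ w : RWalk E i j, w.cplus = m})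
      ⟨h.some.cplus, h.some, rfl⟩
    exact ⟨w, hw.trans_le hn⟩
  · rintro ⟨w, hw⟩
    exact (Nat.sInf_le (s := {m | ∃ w : RWalk E i j, w.cplus = m}) ⟨w, rfl⟩).trans hw

lemma rell_eq_zero_iff {i j : V} (h : Nonempty (RWalk E i j)) :
    rell E i j = 0 ↔ ReflTransGen E j i := by
  rw [← Nat.le_zero, rell_le_iff h, ← RWalk.exists_cplus_eq_zero_iff]
  simp only [Nat.le_zero]

lemma rell_eq_of_reflTransGen_iff {F : V → V → Prop}
    (hreach : ∀ a b, ReflTransGen E a b ↔ ReflTransGen F a b) {i j : V}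
    (hE : ∃ w : RWalk E i j, w.cplus ≤ 1) (hF : ∃ w : RWalk F i j, w.cplus ≤ 1) :
    rell E i j = rell F i j := by
  obtain ⟨wE, hwE⟩ := hE
  obtain ⟨wF, hwF⟩ := hF
  have hE1 := (rell_le_iff ⟨wE⟩ 1).2 ⟨wE, hwE⟩
  have hF1 := (rell_le_iff ⟨wF⟩ 1).2 ⟨wF, hwF⟩
  have h0 : rell E i j = 0 ↔ rell F i j = 0 := by
    rw [rell_eq_zero_iff ⟨wE⟩, rell_eq_zero_iff ⟨wF⟩, hreach]
  omega

def deleteArrow (E : V → V → Prop) (x y a b : V) : Prop :=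
  E a b ∧ ¬(a = x ∧ b = y)

variable {x y : V}

lemma Relation.ReflTransGen.deleteArrow_of_not_reflTransGen {a b : V} (h : ReflTransGen E a b)
    (hy : ¬ ReflTransGen E y b) : ReflTransGen (deleteArrow E x y) a b := by
  induction h with
  | refl => exact .refl
  | @tail c d _ e ih =>
    have hc : ¬ ReflTransGen E y c := fun h' => hy (h'.tail e)
    have hcd : ¬(c = x ∧ d = y) := by
      rintro ⟨-, rfl⟩
      exact hy .refl
    exact (ih hc).tail ⟨e, hcd⟩

lemma reflTransGen_deleteArrow_of_rpath (hacyc : ∀ a b, E a b → ¬ ReflTransGen E b a)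
    (p : RPath E x y) (hp : 2 ≤ p.length) : ReflTransGen (deleteArrow E x y) x y := by
  cases p with
  | nil => simp [RPath.length] at hp
  | @cons c _ p ecy =>
  cases p with
  | nil => simp [RPath.length] at hp
  | @cons d _ p edc =>
  have hcx : c ≠ x := by
    rintro rfl
    exact hacyc _ _ edc p.reflTransGen
  have hxc : ReflTransGen (deleteArrow E x y) x c :=
    (p.reflTransGen.tail edc).deleteArrow_of_not_reflTransGen (hacyc _ _ ecy)
  exact hxc.tail ⟨ecy, fun h => hcx h.1⟩

lemma reflTransGen_deleteArrow_iff (hxy : ReflTransGen (deleteArrow E x y) x y) {a b : V} :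
    ReflTransGen (deleteArrow E x y) a b ↔ ReflTransGen E a b := by
  refine ⟨ReflTransGen.mono (fun _ _ h => h.1) _ _, reflTransGen_closed (fun c d e => ?_) _ _⟩
  by_cases hcd : c = x ∧ d = y
  · obtain ⟨rfl, rfl⟩ := hcd
    exact hxy
  · exact .single ⟨e, hcd⟩

lemma exists_arrow_ne_of_pred (hacyc : ∀ a b, E a b → ¬ ReflTransGen E b a) {z i j : V}
    (hzx : E z x) (hxi : ReflTransGen E x i) (hzj : ∃ w : RWalk E z j, w.cplus ≤ 1) :
    ∃ a b, E a b ∧ a ≠ x ∧ ReflTransGen E a i ∧ ReflTransGen E j b := by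
  rcases RWalk.exists_cplus_le_one_iff.1 hzj with hjz | ⟨a, b, hab, haz, hjb⟩
  · refine ⟨z, x, hzx, ?_, hxi.head hzx, hjz.tail hzx⟩
    rintro rfl
    exact hacyc _ _ hzx .refl
  · refine ⟨a, b, hab, ?_, (haz.tail hzx).trans hxi, hjb⟩
    rintro rfl
    exact hacyc _ _ hzx haz

lemma exists_arrow_ne_of_succ (hacyc : ∀ a b, E a b → ¬ ReflTransGen E b a) {z i j : V}
    (hyz : E y z) (hjy : ReflTransGen E j y) (hiz : ∃ w : RWalk E i z, w.cplus ≤ 1) :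
    ∃ a b, E a b ∧ b ≠ y ∧ ReflTransGen E a i ∧ ReflTransGen E j b := by
  rcases RWalk.exists_cplus_le_one_iff.1 hiz with hzi | ⟨a, b, hab, hai, hzb⟩
  · refine ⟨y, z, hyz, ?_, hzi.head hyz, hjy.tail hyz⟩
    rintro rfl
    exact hacyc _ _ hyz .refl
  · refine ⟨a, b, hab, ?_, hai, (hjy.tail hyz).trans hzb⟩
    rintro rfl
    exact hacyc _ _ hyz hzb

lemma exists_walk_deleteArrow_cplus_le_one (hacyc : ∀ a b, E a b → ¬ ReflTransGen E b a)
    (hshort : ∀ a b, ∃ w : RWalk E a b, w.cplus ≤ 1)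
    (hreach : ∀ a b, ReflTransGen (deleteArrow E x y) a b ↔ ReflTransGen E a b)
    (hxy : (∃ z, E z x) ∨ ∃ z, E y z) (i j : V) :
    ∃ w : RWalk (deleteArrow E x y) i j, w.cplus ≤ 1 := by
  have lift : ∀ a b, E a b → ¬(a = x ∧ b = y) → ReflTransGen E a i → ReflTransGen E j b →
      ∃ w : RWalk (deleteArrow E x y) i j, w.cplus ≤ 1 := fun a b hab hne hai hjb =>
    RWalk.exists_cplus_le_one_iff.2 <|
      .inr ⟨a, b, ⟨hab, hne⟩, (hreach a i).2 hai, (hreach j b).2 hjb⟩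
  rcases RWalk.exists_cplus_le_one_iff.1 (hshort i j) with hji | ⟨a, b, hab, hai, hjb⟩
  · exact RWalk.exists_cplus_le_one_iff.2 (.inl ((hreach j i).2 hji))
  by_cases hα : a = x ∧ b = y
  · obtain ⟨rfl, rfl⟩ := hα
    rcases hxy with ⟨z, hzx⟩ | ⟨z, hyz⟩
    · obtain ⟨a', b', hab', hne, hai', hjb'⟩ :=
        exists_arrow_ne_of_pred hacyc hzx hai (hshort z j)
      exact lift a' b' hab' (fun h => hne h.1) hai' hjb'
    · obtain ⟨a', b', hab', hne, hai', hjb'⟩ :=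
        exists_arrow_ne_of_succ hacyc hyz hjb (hshort i z)
      exact lift a' b' hab' (fun h => hne h.2) hai' hjb'
  · exact lift a b hab hα hai hjb

end

theorem reduction_preserves_ell_general {V : Type} [DecidableEq V]
    (G : V → V → ℕ)
    (hconn : ∀ a b : V, Nonempty (RWalk (fun a b => 0 < G a b) a b))
    (hacyc : ∀ (a : V) (p : RPath (fun a b => 0 < G a b) a a), RPath.length p = 0)
    (hl1 : ∀ a b : V, rell (fun a b => 0 < G a b) a b ≤ 1)
    (x y : V)
    (hcond :
      (((¬ ∀ z : V, G z x = 0) ∨ (¬ ∀ z : V, G y z = 0)) ∧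
        (2 ≤ G x y ∨ ∃ p : RPath (fun a b => 0 < G a b) x y, 2 ≤ RPath.length p)) ∨
      ((∀ z : V, G z x = 0) ∧ (∀ z : V, G y z = 0) ∧ 2 ≤ G x y ∧
        (3 ≤ G x y ∨ ∃ p : RPath (fun a b => 0 < G a b) x y, 2 ≤ RPath.length p))) :
    ∀ i j : V,
      rell (fun a b => 0 < G a b) i j =
      rell (fun a b => if a = x ∧ b = y then 1 < G a b else 0 < G a b) i j := by
  intro i j
  set E : V → V → Prop := fun a b => 0 < G a b
  rcases le_or_gt 2 (G x y) with hparallel | hsingle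
  · congr
    funext a b
    split_ifs with h
    · obtain ⟨rfl, rfl⟩ := h
      exact propext ⟨fun _ => by omega, fun _ => by omega⟩
    · rfl
  have hdel :
      (fun a b => if a = x ∧ b = y then 1 < G a b else 0 < G a b) = deleteArrow E x y := by
    funext a b
    by_cases h : a = x ∧ b = y
    · obtain ⟨rfl, rfl⟩ := h
      rw [if_pos ⟨rfl, rfl⟩]
      exact propext ⟨fun _ => by omega, fun h => (h.2 ⟨rfl, rfl⟩).elim⟩
    · simp [deleteArrow, h, E]
  obtain ⟨hxy, p, hp⟩ : ((∃ z, E z x) ∨ ∃ z, E y z) ∧ ∃ p : RPath E x y, 2 ≤ p.length := by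
    rcases hcond with ⟨hxy, hparallel | hp⟩ | ⟨-, -, hparallel, -⟩
    · omega
    · simp only [not_forall, E, Nat.pos_iff_ne_zero] at hxy ⊢
      exact ⟨hxy, hp⟩
    · omega
  have hshort : ∀ a b, ∃ w : RWalk E a b, w.cplus ≤ 1 :=
    fun a b => (rell_le_iff (hconn a b) 1).1 (hl1 a b)
  have hacyc' : ∀ a b, E a b → ¬ ReflTransGen E b a :=
    fun _ _ => not_reflTransGen_of_acyclic hacyc
  have hreach : ∀ a b, ReflTransGen (deleteArrow E x y) a b ↔ ReflTransGen E a b :=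
    fun _ _ => reflTransGen_deleteArrow_iff (reflTransGen_deleteArrow_of_rpath hacyc' p hp)
  rw [hdel]
  exact rell_eq_of_reflTransGen_iff (fun a b => (hreach a b).symm) (hshort i j)
    (exists_walk_deleteArrow_cplus_le_one hacyc' hshort hreach hxy i j)

/-- Let `Q ∈ 𝒜°`: a finite connected acyclic quiver with a
unique source, in which every vertex meets at least two arrows and
`l(Q) = max l_Q ≤ 1`.  Suppose `Q ⇝ Q'` where `Q'` is obtained from `Q` by
deleting one arrow `α : x → y` such that either
(1) (`s(α)` is not a source or `t(α)` is not a sink) and there is a path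
`w ≠ α` from `x` to `y` (i.e. a second parallel arrow or a path of length
`≥ 2`), or
(2) `s(α)` is a source, `t(α)` is a sink, there are at least three paths from
`x` to `y` and at least two parallel arrows `x → y`.
Then `l_Q(i,j) = l_{Q'}(i,j)` for all vertices `i, j`. -/
theorem reduction_preserves_ell {V : Type} [Fintype V] [DecidableEq V]
    (G : V → V → ℕ)
    (hconn : ∀ a b : V, Nonempty (RWalk (fun a b => 0 < G a b) a b))
    (hacyc : ∀ (a : V) (p : RPath (fun a b => 0 < G a b) a a), RPath.length p = 0)
    (hb : ∀ v : V, 1 < ∑ u : V, (G v u + G u v))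
    (hsrc : ∃ s : V, (∀ z : V, G z s = 0) ∧ ∀ t : V, (∀ z : V, G z t = 0) → t = s)
    (hl1 : ∀ a b : V, rell (fun a b => 0 < G a b) a b ≤ 1)
    (x y : V) (hα : 0 < G x y)
    (hcond :
      (((¬ ∀ z : V, G z x = 0) ∨ (¬ ∀ z : V, G y z = 0)) ∧
        (2 ≤ G x y ∨ ∃ p : RPath (fun a b => 0 < G a b) x y, 2 ≤ RPath.length p)) ∨
      ((∀ z : V, G z x = 0) ∧ (∀ z : V, G y z = 0) ∧ 2 ≤ G x y ∧
        (3 ≤ G x y ∨ ∃ p : RPath (fun a b => 0 < G a b) x y, 2 ≤ RPath.length p))) :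
    ∀ i j : V,
      rell (fun a b => 0 < G a b) i j =
      rell (fun a b => if a = x ∧ b = y then 1 < G a b else 0 < G a b) i j :=
  reduction_preserves_ell_general G hconn hacyc hl1 x y hcond
end
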